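/- Let G be a topological monoid whose monoid of path components π₀(G) is a group, and let Y be a topological space with a continuous left G-action (associative and unital) such that there is a G-equivariant homotopy equivalence φ : G → Y (where G acts on itself by left multiplication). Then for every point y ∈ Y, the orbit map G → Y, g ↦ g·y, is a homotopy equivalence. -/

import Mathlib

/-!
Pull `y` back to `x₀ := φ⁻¹ y`. Equivariance gives `φ ∘ (· * x₀) = (· • φ x₀)`, and right
multiplication by `x₀` is a homotopy equivalence because `x₀` has an inverse up to paths.
The homotopy `φ ∘ φ⁻¹ ≃ id` traces a path from `φ x₀` to `y`, which moves the orbit map of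
`φ x₀` to that of `y` by a homotopy.
-/

open ContinuousMap

section OrbitMap

variable (M : Type*) {X : Type*} [TopologicalSpace M] [TopologicalSpace X] [SMul M X]
  [ContinuousSMul M X]

def orbitMap (x : X) : C(M, X) :=
  ⟨fun g => g • x, continuous_id.smul continuous_const⟩

@[simp]
theorem orbitMap_apply (x : X) (g : M) : orbitMap M x g = g • x := rfl

variable {M}

theorem Joined.homotopic_orbitMap {x₀ x₁ : X} (h : Joined x₀ x₁) :
    (orbitMap M x₀).Homotopic (orbitMap M x₁) := by
  obtain ⟨p⟩ := h
  exact ⟨{ toFun := fun z => z.2 • p z.1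
           continuous_toFun := continuous_snd.smul (p.continuous.comp continuous_fst)
           map_zero_left := fun g => by simp
           map_one_left := fun g => by simp }⟩

end OrbitMap

theorem orbitMap_one (M : Type*) [TopologicalSpace M] [Monoid M] [ContinuousMul M] :
    orbitMap M (1 : M) = ContinuousMap.id M := by
  ext g; exact mul_one g

theorem orbitMap_comp_orbitMap {M : Type*} [TopologicalSpace M] [Monoid M] [ContinuousMul M]
    (a b : M) : (orbitMap M b).comp (orbitMap M a) = orbitMap M (a * b) := by
  ext g; exact mul_assoc g a b

theorem comp_orbitMap_of_map_mul {M X : Type*} [TopologicalSpace M] [Monoid M] [ContinuousMul M]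
    [TopologicalSpace X] [SMul M X] [ContinuousSMul M X] (f : C(M, X))
    (hf : ∀ g x : M, f (g * x) = g • f x) (a : M) :
    f.comp (orbitMap M a) = orbitMap M (f a) := by
  ext g; exact hf g a

def ContinuousMap.HomotopyEquiv.ofHomotopic {X Y : Type*} [TopologicalSpace X]
    [TopologicalSpace Y] (e : X ≃ₕ Y) (f : C(X, Y)) (h : e.toFun.Homotopic f) : X ≃ₕ Y where
  toFun := f
  invFun := e.invFun
  left_inv := ((Homotopic.refl e.invFun).comp h.symm).trans e.left_inv
  right_inv := (h.symm.comp (Homotopic.refl e.invFun)).trans e.right_inv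

/-- On `M` itself `orbitMap M a` is right multiplication by `a`. -/
def orbitMapHomotopyEquiv {M : Type*} [TopologicalSpace M] [Monoid M] [ContinuousMul M]
    {a b : M} (hab : Joined (a * b) 1) (hba : Joined (b * a) 1) : M ≃ₕ M where
  toFun := orbitMap M a
  invFun := orbitMap M b
  left_inv := by
    rw [orbitMap_comp_orbitMap, ← orbitMap_one]; exact hab.homotopic_orbitMap
  right_inv := by
    rw [orbitMap_comp_orbitMap, ← orbitMap_one]; exact hba.homotopic_orbitMap

/-- Let `G` be a grouplike topological monoid (every path component invertible in
`π₀ G`) acting continuously on a space `Y`, and suppose there is a `G`-equivariant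
homotopy equivalence `φ : G → Y`.  Then for every `y : Y` the orbit map `g ↦ g • y`
is a homotopy equivalence `G → Y`. -/
theorem orbit_map_homotopyEquiv
    {G Y : Type*} [TopologicalSpace G] [Monoid G] [ContinuousMul G]
    [TopologicalSpace Y] [MulAction G Y] [ContinuousSMul G Y]
    (hG : ∀ g : G, ∃ h : G, Joined (g * h) 1 ∧ Joined (h * g) 1)
    (φ : ContinuousMap.HomotopyEquiv G Y)
    (hφ : ∀ g x : G, φ.toFun (g * x) = g • φ.toFun x) (y : Y) :
    ∃ e : ContinuousMap.HomotopyEquiv G Y, ∀ g : G, e.toFun g = g • y := by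
  obtain ⟨b, hab, hba⟩ := hG (φ.invFun y)
  let E := (orbitMapHomotopyEquiv hab hba).trans φ
  have hE : E.toFun = orbitMap G (φ.toFun (φ.invFun y)) :=
    comp_orbitMap_of_map_mul φ.toFun hφ _
  obtain ⟨H⟩ := φ.right_inv
  have hy : Joined (φ.toFun (φ.invFun y)) y := ⟨H.evalAt y⟩
  exact ⟨E.ofHomotopic (orbitMap G y) (hE ▸ hy.homotopic_orbitMap), fun _ => rfl⟩
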